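/- Let Λ be a finitely aligned k-graph and {r_λ : λ ∈ Λ} a Toeplitz–Cuntz–Krieger Λ-family in a C*-algebra. Then for each vertex v and each nonempty finite set F ⊆ vΛ, ∏_{λ∈F}(r_v − r_λ r_λ*) = r_v + Σ_{∅ ≠ G ⊆ F} Σ_{λ ∈ MCE(G)} (−1)^{|G|} r_λ r_λ*. -/

import Mathlib

/-! Write `q_λ = t_λ t_λ*` and `S(Gs) = ∑_{λ ∈ MCE(Gs)} q_λ`, with `S(∅) = t_v`. Expanding the
product one factor at a time gives `∑_{Gs ⊆ F} (-1)^|Gs| S(Gs)`, because `t_v S(Gs) = S(Gs)` and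
`q_μ S(Gs) = S(Gs ∪ {μ})`. The latter comes from (TCK3), `q_μ q_λ = ∑_{(α,β) ∈ Λ^min(μ,λ)} q_{μα}`,
and from unique factorisation: `(λ, (α, β)) ↦ μα` is a bijection from the pairs with
`λ ∈ MCE(Gs)` onto `MCE(Gs ∪ {μ})`, with inverse `τ ↦ (τ(0, ⋁ d(Gs)), …)`. -/

/-- A `k`-graph: a countable small category `Λ` together with a degree functor
`d : Λ → ℕᵏ` satisfying the unique factorisation property.  Morphisms are called
paths; `comp μ ν` is the composite `μν`, only meaningful when `s μ = r ν`. -/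
structure KGraph (k : ℕ) where
  Path : Type
  Obj : Type
  pathCountable : Countable Path
  r : Path → Obj
  s : Path → Obj
  d : Path → Fin k → ℕ
  comp : Path → Path → Path
  ident : Obj → Path
  r_ident : ∀ v, r (ident v) = v
  s_ident : ∀ v, s (ident v) = v
  d_ident : ∀ v, d (ident v) = 0
  r_comp : ∀ μ ν, s μ = r ν → r (comp μ ν) = r μ
  s_comp : ∀ μ ν, s μ = r ν → s (comp μ ν) = s ν
  d_comp : ∀ μ ν, s μ = r ν → d (comp μ ν) = d μ + d ν
  ident_comp : ∀ lam, comp (ident (r lam)) lam = lam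
  comp_ident : ∀ lam, comp lam (ident (s lam)) = lam
  comp_assoc : ∀ lam μ ν, s lam = r μ → s μ = r ν →
    comp (comp lam μ) ν = comp lam (comp μ ν)
  factor : ∀ (lam : Path) (m n : Fin k → ℕ), d lam = m + n →
    ∃! p : Path × Path, s p.1 = r p.2 ∧ d p.1 = m ∧ d p.2 = n ∧ lam = comp p.1 p.2

/-- The `i`-th standard generator `e_i` of `ℕᵏ`. -/
def eVec {k : ℕ} (i : Fin k) : Fin k → ℕ := Pi.single i 1

namespace KGraph

variable {k : ℕ} (G : KGraph k)

/-- `lam` extends `μ`, i.e. `lam ∈ μΛ`. -/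
def Extends (lam μ : G.Path) : Prop := ∃ α, G.s μ = G.r α ∧ lam = G.comp μ α

/-- `CE(μ,ν)`: common extensions of `μ` and `ν`. -/
def CE (μ ν : G.Path) : Set G.Path := {lam | G.Extends lam μ ∧ G.Extends lam ν}

/-- `MCE(μ,ν)`: minimal common extensions of `μ` and `ν` (degree `d μ ⊔ d ν`). -/
def MCE (μ ν : G.Path) : Set G.Path :=
  {lam | lam ∈ G.CE μ ν ∧ G.d lam = G.d μ ⊔ G.d ν}

/-- `Λ^min(μ,ν)`: pairs `(α,β)` with `μα = νβ ∈ MCE(μ,ν)`. -/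
def minPairs (μ ν : G.Path) : Set (G.Path × G.Path) :=
  {p | G.s μ = G.r p.1 ∧ G.s ν = G.r p.2 ∧ G.comp μ p.1 = G.comp ν p.2 ∧
    G.comp μ p.1 ∈ G.MCE μ ν}

/-- `Λ` is finitely aligned if each `Λ^min(μ,ν)` is finite. -/
def FinitelyAligned : Prop := ∀ μ ν : G.Path, (G.minPairs μ ν).Finite

/-- `Λ` is locally-convex. -/
def LocallyConvex : Prop :=
  ∀ (i j : Fin k), i ≠ j → ∀ lam μ : G.Path,
    G.d lam = eVec i → G.d μ = eVec j → G.r lam = G.r μ →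
    (∃ η, G.d η = eVec j ∧ G.r η = G.s lam) ∧
    (∃ η, G.d η = eVec i ∧ G.r η = G.s μ)

/-- `Λ^{≤ n}`. -/
def LeSet (n : Fin k → ℕ) : Set G.Path :=
  {lam | G.d lam ≤ n ∧
    ∀ i, G.d lam i < n i → ¬∃ η, G.d η = eVec i ∧ G.r η = G.s lam}

open Classical in
/-- Split a path `lam` at degree `m ≤ d lam` into `(lam(0,m), lam(m, d lam))`. -/
noncomputable def split (lam : G.Path) (m : Fin k → ℕ) : G.Path × G.Path :=
  if h : m ≤ G.d lam then
    (G.factor lam m (G.d lam - m)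
      (funext fun i => (Nat.add_sub_cancel' ((Pi.le_def.mp h) i)).symm)).exists.choose
  else (lam, lam)

/-- The segment `lam(m,n)` (for `m ≤ n ≤ d lam`), of degree `n - m`. -/
noncomputable def seg (lam : G.Path) (m n : Fin k → ℕ) : G.Path :=
  (G.split (G.split lam n).1 m).2

end KGraph

/-- A Toeplitz–Cuntz–Krieger `Λ`-family in a `*`-ring (in applications, a
C*-algebra), for a finitely aligned `k`-graph: (TCK1) the vertex elements are
mutually orthogonal (self-adjoint, idempotent) projections; (TCK2)
`t_μ t_ν = t_{μν}` when `s μ = r ν`; (TCK3)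
`t_μ* t_ν = ∑_{(α,β) ∈ Λ^min(μ,ν)} t_α t_β*`. -/
structure TCKFamily {k : ℕ} (G : KGraph k) (hfa : G.FinitelyAligned)
    (A : Type*) [NonUnitalRing A] [StarRing A] where
  t : G.Path → A
  star_vertex : ∀ v, star (t (G.ident v)) = t (G.ident v)
  mul_vertex : ∀ v, t (G.ident v) * t (G.ident v) = t (G.ident v)
  orth_vertex : ∀ v w, v ≠ w → t (G.ident v) * t (G.ident w) = 0
  mul_comp : ∀ μ ν, G.s μ = G.r ν → t (G.comp μ ν) = t μ * t ν
  tck3 : ∀ μ ν, star (t μ) * t ν =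
    ∑ p ∈ (hfa μ ν).toFinset, t p.1 * star (t p.2)

/-- The product `Δ(t)^L := ∏_{lam ∈ L} (t_v - t_lam t_lam*)` along an
enumeration `L` of a finite subset of `vΛ`.  (It is realised as a fold with
unit `t_v`; since every factor is a subprojection of `t_v`, this agrees with
the usual product for a nonempty enumeration.) -/
def deltaProd {k : ℕ} (G : KGraph k) {A : Type*} [NonUnitalRing A] [StarRing A]
    (t : G.Path → A) (v : G.Obj) (L : List G.Path) : A :=
  L.foldr (fun lam x => (t (G.ident v) - t lam * star (t lam)) * x) (t (G.ident v))

/-- `MCE(F)` for a finite set `F` of paths: the common extensions of all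
elements of `F` of degree `⋁_{ν ∈ F} d ν`. -/
def MCEset {k : ℕ} (G : KGraph k) (F : Finset G.Path) : Set G.Path :=
  {lam | (∀ ν ∈ F, G.Extends lam ν) ∧ G.d lam = F.sup G.d}

namespace KGraph

variable {k : ℕ} {G : KGraph k}

theorem eq_and_eq_of_comp_eq_comp {μ α μ' α' : G.Path}
    (h : G.s μ = G.r α) (h' : G.s μ' = G.r α')
    (hc : G.comp μ α = G.comp μ' α') (hd : G.d μ = G.d μ') : μ = μ' ∧ α = α' := by
  have hdα : G.d α' = G.d α := by
    have := (G.d_comp _ _ h).symm.trans (hc ▸ G.d_comp _ _ h')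
    rw [hd] at this
    exact (add_left_cancel this).symm
  obtain ⟨p, -, hp⟩ := G.factor (G.comp μ α) (G.d μ) (G.d α) (G.d_comp _ _ h)
  have e := (hp (μ, α) ⟨h, rfl, rfl, rfl⟩).trans (hp (μ', α') ⟨h', hd.symm, hdα, hc⟩).symm
  exact Prod.ext_iff.mp e

theorem eq_ident_of_d_eq_zero {α : G.Path} (h : G.d α = 0) : α = G.ident (G.r α) :=
  (eq_and_eq_of_comp_eq_comp (G.s_ident _) (G.r_ident _).symm
    ((G.ident_comp α).trans (G.comp_ident α).symm) (by rw [G.d_ident, h])).1.symm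

theorem extends_refl (lam : G.Path) : G.Extends lam lam :=
  ⟨G.ident (G.s lam), (G.r_ident _).symm, (G.comp_ident lam).symm⟩

namespace Extends

variable {lam μ ν : G.Path}

theorem r_eq (h : G.Extends lam μ) : G.r lam = G.r μ := by
  obtain ⟨α, hs, rfl⟩ := h
  exact G.r_comp _ _ hs

theorem d_le (h : G.Extends lam μ) : G.d μ ≤ G.d lam := by
  obtain ⟨α, hs, rfl⟩ := h
  rw [G.d_comp _ _ hs]
  exact le_self_add

theorem trans (h₁ : G.Extends lam μ) (h₂ : G.Extends μ ν) : G.Extends lam ν := by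
  obtain ⟨α, hsα, rfl⟩ := h₁
  obtain ⟨β, hsβ, rfl⟩ := h₂
  have hβα : G.s β = G.r α := (G.s_comp _ _ hsβ).symm.trans hsα
  exact ⟨G.comp β α, (G.r_comp _ _ hβα).symm ▸ hsβ, G.comp_assoc _ _ _ hsβ hβα⟩

theorem eq_of_d_eq (h : G.Extends lam μ) (hd : G.d lam = G.d μ) : lam = μ := by
  obtain ⟨α, hs, rfl⟩ := h
  have hα : G.d α = 0 := left_eq_add.mp (hd.symm.trans (G.d_comp _ _ hs))
  rw [eq_ident_of_d_eq_zero hα, ← hs, G.comp_ident]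

end Extends

theorem split_spec {lam : G.Path} {m : Fin k → ℕ} (h : m ≤ G.d lam) :
    G.s (G.split lam m).1 = G.r (G.split lam m).2 ∧ G.d (G.split lam m).1 = m ∧
      lam = G.comp (G.split lam m).1 (G.split lam m).2 := by
  unfold KGraph.split
  rw [dif_pos h]
  obtain ⟨h1, h2, -, h4⟩ := (G.factor lam m (G.d lam - m)
    (funext fun i => (Nat.add_sub_cancel' ((Pi.le_def.mp h) i)).symm)).exists.choose_spec
  exact ⟨h1, h2, h4⟩

theorem split_fst_eq {lam μ : G.Path} (h : G.Extends lam μ) :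
    (G.split lam (G.d μ)).1 = μ := by
  obtain ⟨s1, s2, s3⟩ := split_spec h.d_le
  obtain ⟨α, hs, he⟩ := h
  exact (eq_and_eq_of_comp_eq_comp s1 hs (s3.symm.trans he) s2).1

theorem Extends.split_fst {lam ν : G.Path} {m : Fin k → ℕ}
    (h : G.Extends lam ν) (hν : G.d ν ≤ m) (hm : m ≤ G.d lam) :
    G.Extends (G.split lam m).1 ν := by
  obtain ⟨α, hs, rfl⟩ := h
  have hdα : m - G.d ν ≤ G.d α := by
    intro i
    have h1 := congrFun (G.d_comp _ _ hs) i
    have h2 := Pi.le_def.mp hm i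
    have h3 := Pi.le_def.mp hν i
    simp only [Pi.add_apply] at h1
    show m i - G.d ν i ≤ G.d α i
    omega
  obtain ⟨s1, s2, s3⟩ := split_spec hdα
  set α₁ := (G.split α (m - G.d ν)).1
  set α₂ := (G.split α (m - G.d ν)).2
  have hsν : G.s ν = G.r α₁ := by rw [hs, s3, G.r_comp _ _ s1]
  have hdc : G.d (G.comp ν α₁) = m := by
    rw [G.d_comp _ _ hsν, s2, add_tsub_cancel_of_le hν]
  have hext : G.Extends (G.comp ν α) (G.comp ν α₁) :=
    ⟨α₂, (G.s_comp _ _ hsν).trans s1, by rw [G.comp_assoc _ _ _ hsν s1, ← s3]⟩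
  rw [← hdc, split_fst_eq hext]
  exact ⟨α₁, hsν, rfl⟩

end KGraph

section MCE

variable {k : ℕ} {G : KGraph k}

theorem MCEset_singleton (μ : G.Path) : MCEset G {μ} = {μ} := by
  ext lam
  simp only [MCEset, Finset.mem_singleton, forall_eq, Finset.sup_singleton,
    Set.mem_ofPred_eq, Set.mem_singleton_iff]
  constructor
  · rintro ⟨h, hd⟩
    exact h.eq_of_d_eq hd
  · rintro rfl
    exact ⟨KGraph.extends_refl _, rfl⟩

theorem comp_mem_MCEset_insert [DecidableEq G.Path] {μ lam : G.Path} {Gs : Finset G.Path}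
    (hlam : lam ∈ MCEset G Gs) {p : G.Path × G.Path} (hp : p ∈ G.minPairs μ lam) :
    G.comp μ p.1 ∈ MCEset G (insert μ Gs) := by
  obtain ⟨hext, hd⟩ := hlam
  obtain ⟨hp1, hp2, hp3, -, hpd⟩ := hp
  refine ⟨fun ν hν => ?_, by rw [Finset.sup_insert, hpd, hd]⟩
  rcases Finset.mem_insert.mp hν with rfl | hν
  · exact ⟨p.1, hp1, rfl⟩
  · exact (hp3 ▸ ⟨p.2, hp2, rfl⟩ : G.Extends (G.comp μ p.1) lam).trans (hext ν hν)

/-- A minimal common extension of `μ` and `λ ∈ MCE(Gs)` remembers `λ` as its initial segment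
of degree `⋁ d(Gs)`, and then `(α, β)` by unique factorisation. -/
theorem eq_of_comp_eq_comp_of_mem_minPairs {μ lam lam' : G.Path} {Gs : Finset G.Path}
    (hlam : lam ∈ MCEset G Gs) (hlam' : lam' ∈ MCEset G Gs)
    {p p' : G.Path × G.Path} (hp : p ∈ G.minPairs μ lam) (hp' : p' ∈ G.minPairs μ lam')
    (h : G.comp μ p.1 = G.comp μ p'.1) : lam = lam' ∧ p = p' := by
  obtain ⟨hp1, hp2, hp3, -⟩ := hp
  obtain ⟨hp1', hp2', hp3', -⟩ := hp'
  have hlam_eq : lam = lam' := by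
    rw [← KGraph.split_fst_eq (⟨p.2, hp2, hp3⟩ : G.Extends (G.comp μ p.1) lam),
      ← KGraph.split_fst_eq (⟨p'.2, hp2', hp3'⟩ : G.Extends (G.comp μ p'.1) lam'),
      hlam.2, hlam'.2, h]
  subst hlam_eq
  exact ⟨rfl, Prod.ext (KGraph.eq_and_eq_of_comp_eq_comp hp1 hp1' h rfl).2
    (KGraph.eq_and_eq_of_comp_eq_comp hp2 hp2' (hp3.symm.trans (h.trans hp3')) rfl).2⟩

theorem exists_mem_minPairs_of_mem_MCEset_insert [DecidableEq G.Path] {μ tau : G.Path}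
    {Gs : Finset G.Path}
    (htau : tau ∈ MCEset G (insert μ Gs)) :
    ∃ lam ∈ MCEset G Gs, ∃ p ∈ G.minPairs μ lam, G.comp μ p.1 = tau := by
  obtain ⟨hext, hd⟩ := htau
  rw [Finset.sup_insert] at hd
  have hm : Gs.sup G.d ≤ G.d tau := hd ▸ le_sup_right
  obtain ⟨s1, s2, s3⟩ := KGraph.split_spec hm
  obtain ⟨α, hsα, hα⟩ := hext μ (Finset.mem_insert_self μ Gs)
  refine ⟨(G.split tau (Gs.sup G.d)).1,
    ⟨fun ν hν => (hext ν (Finset.mem_insert_of_mem hν)).split_fst (Finset.le_sup hν) hm, s2⟩,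
    (α, (G.split tau (Gs.sup G.d)).2), ⟨hsα, s1, hα.symm.trans s3, ?_⟩, hα.symm⟩
  rw [← hα]
  exact ⟨⟨⟨α, hsα, hα⟩, ⟨_, s1, s3⟩⟩, by rw [s2, hd]⟩

end MCE

/-- The sum `∑_{λ ∈ MCE(Gs)} t_λ t_λ*`, with the paper's convention `MCE(∅) = {v}` and the junk
value `0` when `MCE(Gs)` is infinite. -/
noncomputable def mceSum {k : ℕ} (G : KGraph k) {A : Type*} [NonUnitalRing A] [StarRing A]
    (t : G.Path → A) (v : G.Obj) (Gs : Finset G.Path) : A :=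
  open Classical in
  if Gs = ∅ then t (G.ident v)
  else if h : (MCEset G Gs).Finite then ∑ lam ∈ h.toFinset, t lam * star (t lam) else 0

namespace TCKFamily

variable {k : ℕ} {G : KGraph k} {hfa : G.FinitelyAligned}
  {A : Type*} [NonUnitalRing A] [StarRing A] (T : TCKFamily G hfa A)

def proj (lam : G.Path) : A := T.t lam * star (T.t lam)

variable {v : G.Obj} {lam : G.Path}

theorem t_ident_mul (h : G.r lam = v) : T.t (G.ident v) * T.t lam = T.t lam := by
  subst h
  rw [← T.mul_comp _ _ (G.s_ident _), G.ident_comp]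

theorem t_ident_mul_proj (h : G.r lam = v) : T.t (G.ident v) * T.proj lam = T.proj lam := by
  rw [proj, ← mul_assoc, T.t_ident_mul h]

theorem proj_mul_t_ident (h : G.r lam = v) : T.proj lam * T.t (G.ident v) = T.proj lam := by
  rw [proj, mul_assoc, ← T.star_vertex v, ← star_mul, T.t_ident_mul h]

theorem proj_mul_proj (μ lam : G.Path) :
    T.proj μ * T.proj lam = ∑ p ∈ (hfa μ lam).toFinset, T.proj (G.comp μ p.1) := by
  calc T.proj μ * T.proj lam = T.t μ * (star (T.t μ) * T.t lam) * star (T.t lam) := by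
        simp only [proj, mul_assoc]
    _ = _ := by
      rw [T.tck3, Finset.mul_sum, Finset.sum_mul]
      refine Finset.sum_congr rfl fun p hp => ?_
      obtain ⟨hp1, hp2, hp3, -⟩ := (Set.Finite.mem_toFinset _).mp hp
      rw [proj, show star (T.t (G.comp μ p.1)) = star (T.t (G.comp lam p.2)) by rw [hp3],
        T.mul_comp _ _ hp1, T.mul_comp _ _ hp2, star_mul]
      simp only [mul_assoc]

variable [DecidableEq G.Path]

theorem proj_mul_sum_MCEset (μ : G.Path) {Gs : Finset G.Path}
    (h : (MCEset G Gs).Finite) (h' : (MCEset G (insert μ Gs)).Finite) :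
    T.proj μ * ∑ lam ∈ h.toFinset, T.proj lam = ∑ tau ∈ h'.toFinset, T.proj tau := by
  simp only [Finset.mul_sum, proj_mul_proj]
  rw [Finset.sum_sigma']
  refine Finset.sum_nbij (fun x => G.comp μ x.2.1) ?_ ?_ ?_ fun _ _ => rfl
  · rintro ⟨lam, p⟩ hx
    simp only [Finset.mem_sigma, Set.Finite.mem_toFinset] at hx ⊢
    exact comp_mem_MCEset_insert hx.1 hx.2
  · rintro ⟨lam, p⟩ hx ⟨lam', p'⟩ hx' hxx'
    simp only [Finset.coe_sigma, Set.mem_sigma_iff, Finset.mem_coe,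
      Set.Finite.mem_toFinset] at hx hx'
    obtain ⟨rfl, rfl⟩ := eq_of_comp_eq_comp_of_mem_minPairs hx.1 hx'.1 hx.2 hx'.2 hxx'
    rfl
  · intro tau htau
    obtain ⟨lam, hlam, p, hp, rfl⟩ :=
      exists_mem_minPairs_of_mem_MCEset_insert ((Set.Finite.mem_toFinset _).mp htau)
    exact ⟨⟨lam, p⟩, by simpa using ⟨hlam, hp⟩, rfl⟩

theorem t_ident_mul_mceSum {Gs : Finset G.Path} (hv : ∀ ν ∈ Gs, G.r ν = v) :
    T.t (G.ident v) * mceSum G T.t v Gs = mceSum G T.t v Gs := by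
  unfold mceSum
  split_ifs with hGs h
  · exact T.mul_vertex v
  · obtain ⟨ν, hν⟩ := Finset.nonempty_iff_ne_empty.mpr hGs
    rw [Finset.mul_sum]
    refine Finset.sum_congr rfl fun tau htau => ?_
    have hr : G.r tau = v := (((Set.Finite.mem_toFinset _).mp htau).1 ν hν).r_eq.trans (hv ν hν)
    exact T.t_ident_mul_proj hr
  · exact mul_zero _

theorem proj_mul_mceSum {μ : G.Path} (hμ : G.r μ = v) {Gs : Finset G.Path}
    (h : Gs.Nonempty → (MCEset G Gs).Finite) (h' : (MCEset G (insert μ Gs)).Finite) :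
    T.proj μ * mceSum G T.t v Gs = mceSum G T.t v (insert μ Gs) := by
  rw [mceSum, mceSum, if_neg (Finset.insert_nonempty _ _).ne_empty, dif_pos h']
  rcases Gs.eq_empty_or_nonempty with rfl | hGs
  · have hμ' : h'.toFinset = {μ} :=
      Finset.coe_injective (by
        rw [Set.Finite.coe_toFinset, LawfulSingleton.insert_empty_eq, Finset.coe_singleton]
        exact MCEset_singleton μ)
    rw [if_pos rfl, T.proj_mul_t_ident hμ, hμ', Finset.sum_singleton, proj]
  · rw [if_neg hGs.ne_empty, dif_pos (h hGs)]
    exact T.proj_mul_sum_MCEset μ (h hGs) h'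

theorem deltaProd_eq_sum_powerset (L : List G.Path) (hnd : L.Nodup)
    (hv : ∀ lam ∈ L, G.r lam = v)
    (hfin : ∀ Gs ⊆ L.toFinset, Gs.Nonempty → (MCEset G Gs).Finite) :
    deltaProd G T.t v L =
      ∑ Gs ∈ L.toFinset.powerset, (-1 : ℤ) ^ Gs.card • mceSum G T.t v Gs := by
  classical
  induction L with
  | nil => simp [deltaProd, mceSum]
  | cons μ L ih =>
    obtain ⟨hμ, hnd⟩ := List.nodup_cons.mp hnd
    have hμL : μ ∉ L.toFinset := mt List.mem_toFinset.mp hμ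
    have hsub : L.toFinset ⊆ (μ :: L).toFinset := by
      rw [List.toFinset_cons]
      exact Finset.subset_insert _ _
    have hμv : G.r μ = v := hv μ List.mem_cons_self
    have ih := ih hnd (fun lam hl => hv lam (List.mem_cons_of_mem _ hl))
      (fun Gs hGs => hfin Gs (hGs.trans hsub))
    change (T.t (G.ident v) - T.proj μ) * deltaProd G T.t v L = _
    rw [ih, Finset.mul_sum, List.toFinset_cons, Finset.sum_powerset_insert hμL,
      ← Finset.sum_add_distrib]
    refine Finset.sum_congr rfl fun Gs hGs => ?_
    have hGs := Finset.mem_powerset.mp hGs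
    have hvGs : ∀ ν ∈ Gs, G.r ν = v := fun ν hν =>
      hv ν (List.mem_cons_of_mem _ (List.mem_toFinset.mp (hGs hν)))
    have hfin' : (MCEset G (insert μ Gs)).Finite := by
      refine hfin _ ?_ (Finset.insert_nonempty _ _)
      rw [List.toFinset_cons]
      exact Finset.insert_subset_insert μ hGs
    rw [sub_mul, mul_smul_comm, mul_smul_comm, T.t_ident_mul_mceSum hvGs,
      T.proj_mul_mceSum hμv (hfin Gs (hGs.trans hsub)) hfin',
      Finset.card_insert_of_notMem (fun h => hμL (hGs h)), pow_succ, mul_neg_one, neg_smul,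
      sub_eq_add_neg]

end TCKFamily

open Classical in
theorem stmt13_general {k : ℕ} (G : KGraph k) (hfa : G.FinitelyAligned)
    {A : Type*} [NonUnitalNormedRing A] [StarRing A]
    (T : TCKFamily G hfa A) (v : G.Obj)
    (F : Finset G.Path) (hFv : ∀ lam ∈ F, G.r lam = v)
    (hMCE : ∀ Gs : Finset G.Path, Gs ⊆ F → Gs.Nonempty → (MCEset G Gs).Finite)
    (L : List G.Path) (hL : L.Nodup) (hLF : L.toFinset = F) :
    deltaProd G T.t v L =
      T.t (G.ident v) +
        ∑ Gs ∈ (F.powerset.filter Finset.Nonempty).attach,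
          ((-1 : ℤ) ^ Gs.1.card) •
            ∑ lam ∈ (hMCE Gs.1
                (Finset.mem_powerset.mp (Finset.mem_filter.mp Gs.2).1)
                (Finset.mem_filter.mp Gs.2).2).toFinset,
              T.t lam * star (T.t lam) := by
  subst hLF
  have hempty : L.toFinset.powerset.filter (fun Gs => ¬ Gs.Nonempty) = {∅} := by
    ext Gs
    simp +contextual [Finset.not_nonempty_iff_eq_empty]
  rw [T.deltaProd_eq_sum_powerset L hL (fun lam hl => hFv lam (List.mem_toFinset.mpr hl)) hMCE,
    ← Finset.sum_filter_add_sum_filter_not _ Finset.Nonempty, hempty, Finset.sum_singleton,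
    add_comm, ← Finset.sum_attach]
  congr 1
  · simp [mceSum]
  · refine Finset.sum_congr rfl fun Gs _ => ?_
    obtain ⟨hsub, hne⟩ := Finset.mem_filter.mp Gs.2
    rw [mceSum, if_neg hne.ne_empty, dif_pos (hMCE _ (Finset.mem_powerset.mp hsub) hne)]

open Classical in
/-- for a Toeplitz–Cuntz–Krieger `Λ`-family `{t_lam}` in a
C*-algebra, a vertex `v` and a nonempty finite `F ⊆ vΛ`,
`∏_{lam ∈ F}(t_v - t_lam t_lam*) = t_v + ∑_{∅ ≠ Gs ⊆ F} ∑_{lam ∈ MCE(Gs)} (-1)^{|Gs|} t_lam t_lam*`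
(the product taken along any enumeration `L` of `F`).  Finiteness of each
`MCE(Gs)` — a consequence of finite alignment — is supplied by `hMCE` so that
the right-hand sums can be formed. -/
theorem stmt13 {k : ℕ} (G : KGraph k) (hfa : G.FinitelyAligned)
    {A : Type*} [NonUnitalNormedRing A] [StarRing A] [CStarRing A]
    [NormedSpace ℂ A] [IsScalarTower ℂ A A] [SMulCommClass ℂ A A]
    [StarModule ℂ A] [CompleteSpace A]
    (T : TCKFamily G hfa A) (v : G.Obj)
    (F : Finset G.Path) (hF : F.Nonempty) (hFv : ∀ lam ∈ F, G.r lam = v)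
    (hMCE : ∀ Gs : Finset G.Path, Gs ⊆ F → Gs.Nonempty → (MCEset G Gs).Finite)
    (L : List G.Path) (hL : L.Nodup) (hLF : L.toFinset = F) :
    deltaProd G T.t v L =
      T.t (G.ident v) +
        ∑ Gs ∈ (F.powerset.filter Finset.Nonempty).attach,
          ((-1 : ℤ) ^ Gs.1.card) •
            ∑ lam ∈ (hMCE Gs.1
                (Finset.mem_powerset.mp (Finset.mem_filter.mp Gs.2).1)
                (Finset.mem_filter.mp Gs.2).2).toFinset,
              T.t lam * star (T.t lam) :=
  stmt13_general G hfa T v F hFv hMCE L hL hLF
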